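/- arXiv:2306.17559 — 2 statements merged into one kernel-verified Lean document; each statement's English description precedes it below -/
import Mathlib

section
/- Let U be a Clifford operator on N qubits, t and t' natural numbers with t ≡ t' (mod 2), and G a linear operator on (ℂ²)^⊗N with U G U† = G. Define L = Σ_P γ_P(G)^{t'} P^⊗t, where the sum is over unsigned Pauli operators P and γ_P(G) = tr(G P)/2^N. Then U^⊗t L U†^⊗t = L. -/
open Matrix MeasureTheory

/-- Basis index for `N` qubits. -/
abbrev QubitIdx (N : ℕ) := Fin N → Fin 2

/-- Linear operators on the Hilbert space `(ℂ²)^⊗N`, as matrices. -/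
abbrev Op (N : ℕ) := Matrix (QubitIdx N) (QubitIdx N) ℂ

/-- The single-qubit Pauli matrices I, X, Y, Z. -/
noncomputable def σ1 : Fin 4 → Matrix (Fin 2) (Fin 2) ℂ
  | 0 => 1
  | 1 => !![0, 1; 1, 0]
  | 2 => !![0, -Complex.I; Complex.I, 0]
  | 3 => !![1, 0; 0, -1]

/-- The unsigned Pauli operator on `N` qubits indexed by `a : Fin N → Fin 4`
(the Kronecker product of the single-qubit Paulis `σ1 (a k)`). -/
noncomputable def pauli {N : ℕ} (a : Fin N → Fin 4) : Op N :=
  Matrix.of fun i j => ∏ k, σ1 (a k) (i k) (j k)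

/-- The phase factors `{±1, ±i}`. -/
def phases : Set ℂ := {1, -1, Complex.I, -Complex.I}

/-- The Pauli group on `N` qubits: phased unsigned Paulis. -/
def PauliGroup (N : ℕ) : Set (Op N) :=
  {P | ∃ c ∈ phases, ∃ a : Fin N → Fin 4, P = c • pauli a}

/-- A Clifford operator: a unitary whose conjugation action preserves the Pauli group. -/
def IsClifford {N : ℕ} (U : Op N) : Prop :=
  U ∈ Matrix.unitaryGroup (QubitIdx N) ℂ ∧
    ∀ P ∈ PauliGroup N, U * P * Uᴴ ∈ PauliGroup N

/-- The `G`-symmetric unitary group `U_{N,G}`: unitaries commuting with every element of `G`. -/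
def UnitarySym (N : ℕ) (G : Set (Op N)) : Set (Op N) :=
  {U | U ∈ Matrix.unitaryGroup (QubitIdx N) ℂ ∧ ∀ g ∈ G, U * g = g * U}

/-- The `G`-symmetric Clifford group `C_{N,G}`. -/
def CliffordSym (N : ℕ) (G : Set (Op N)) : Set (Op N) :=
  {U | IsClifford U ∧ U ∈ UnitarySym N G}

/-- `G` is a subgroup of the unitary group on `N` qubits. -/
def IsUnitarySubgroup {N : ℕ} (G : Set (Op N)) : Prop :=
  (∀ g ∈ G, g ∈ Matrix.unitaryGroup (QubitIdx N) ℂ) ∧ (1 : Op N) ∈ G ∧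
    (∀ g ∈ G, ∀ h ∈ G, g * h ∈ G) ∧ (∀ g ∈ G, gᴴ ∈ G)

/-- Operators on the `t`-fold tensor power `H^⊗t` of the `N`-qubit Hilbert space. -/
abbrev BigOp (N t : ℕ) := Matrix (Fin t → QubitIdx N) (Fin t → QubitIdx N) ℂ

/-- The `t`-fold tensor (Kronecker) power `A^⊗t` of an operator `A`. -/
noncomputable def tpow {N : ℕ} (t : ℕ) (A : Op N) : BigOp N t :=
  Matrix.of fun i j => ∏ s, A (i s) (j s)

noncomputable instance OpMeasurableSpace {N : ℕ} : MeasurableSpace (Op N) := borel (Op N)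

/-- The `t`-fold twirling channel `Φ_{t,μ}(L) = ∫ U^⊗t L (U^⊗t)† dμ(U)`, defined entrywise. -/
noncomputable def twirl {N : ℕ} (t : ℕ) (μ : Measure (Op N)) (L : BigOp N t) : BigOp N t :=
  Matrix.of fun i j => ∫ U, (tpow t U * L * (tpow t U)ᴴ) i j ∂μ

/-- The Kronecker power `A^⊗N` of a single-qubit operator, as an operator on `N` qubits. -/
noncomputable def kronPow {N : ℕ} (A : Matrix (Fin 2) (Fin 2) ℂ) : Op N :=
  Matrix.of fun i j => ∏ k, A (i k) (j k)

/-- The single-qubit unitary `e^{iθZ}`. -/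
noncomputable def expZ (θ : ℝ) : Matrix (Fin 2) (Fin 2) ℂ :=
  !![Complex.exp ((θ : ℂ) * Complex.I), 0; 0, Complex.exp (-(θ : ℂ) * Complex.I)]

/-- The permutation operator `V_σ` on the threefold tensor power `H^⊗3`. -/
noncomputable def permOp {N : ℕ} (σ : Equiv.Perm (Fin 3)) : BigOp N 3 :=
  Matrix.of fun i j => if i = j ∘ ⇑σ⁻¹ then 1 else 0

/-- The tensor product `G₁ ⊗ G₂ ⊗ G₃` as an operator on `H^⊗3`. -/
noncomputable def tprod3 {N : ℕ} (G₁ G₂ G₃ : Op N) : BigOp N 3 :=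
  Matrix.of fun i j => G₁ (i 0) (j 0) * G₂ (i 1) (j 1) * G₃ (i 2) (j 2)

/-!
A Clifford `U` permutes the unsigned Paulis up to signs, `U P_a U† = c_a P_{b a}` with
`c_a = ±1` (Hermiticity excludes `±i`) and `b` a bijection (Paulis are trace-orthogonal).
Conjugation by `U^⊗t` therefore sends the term `a` of `L` to `c_a^t γ_a^{t'} P_{b a}^⊗t`,
while `U G U† = G` gives `γ_{b a} = c_a γ_a`. Since `t ≡ t'` mod 2, `c_a^t = c_a^{t'}`, so the
term `a` is sent to the term `b a`, and reindexing the sum by `b` returns `L`.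
-/

section PiKron

variable {ι κ R : Type*} [Fintype ι] [CommSemiring R]

def piKron (A : ι → Matrix κ κ R) : Matrix (ι → κ) (ι → κ) R :=
  of fun i j => ∏ k, A k (i k) (j k)

theorem piKron_conjTranspose [StarRing R] (A : ι → Matrix κ κ R) :
    (piKron A)ᴴ = piKron fun k => (A k)ᴴ := by
  ext i j
  simp [piKron, conjTranspose_apply, star_prod]

theorem piKron_smul (c : R) (A : Matrix κ κ R) :
    piKron (fun _ : ι => c • A) = c ^ Fintype.card ι • piKron fun _ : ι => A := by
  ext i j
  simp [piKron, Finset.prod_mul_distrib]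

variable [DecidableEq ι] [Fintype κ]

theorem piKron_mul (A B : ι → Matrix κ κ R) : piKron A * piKron B = piKron (A * B) := by
  ext i j
  simp only [piKron, mul_apply, of_apply, Pi.mul_apply]
  rw [← Fintype.piFinset_univ, Finset.prod_univ_sum]
  exact Finset.sum_congr rfl fun x _ => Finset.prod_mul_distrib.symm

theorem trace_piKron (A : ι → Matrix κ κ R) : trace (piKron A) = ∏ k, trace (A k) := by
  simp only [trace, diag, piKron, of_apply]
  rw [Finset.prod_univ_sum, Fintype.piFinset_univ]

end PiKron

section Pauli

theorem σ1_conjTranspose (m : Fin 4) : (σ1 m)ᴴ = σ1 m := by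
  fin_cases m <;> ext i j <;> fin_cases i <;> fin_cases j <;> simp [σ1, conjTranspose_apply]

theorem trace_σ1_mul_σ1 (m n : Fin 4) : trace (σ1 m * σ1 n) = if m = n then 2 else 0 := by
  fin_cases m <;> fin_cases n <;>
    simp [σ1, trace, Fin.sum_univ_two, one_apply] <;> ring_nf

variable {N : ℕ}

theorem pauli_eq_piKron (a : Fin N → Fin 4) : pauli a = piKron fun k => σ1 (a k) := rfl

theorem pauli_conjTranspose (a : Fin N → Fin 4) : (pauli a)ᴴ = pauli a := by
  simp only [pauli_eq_piKron, piKron_conjTranspose, σ1_conjTranspose]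

theorem trace_pauli_mul_pauli (a b : Fin N → Fin 4) :
    trace (pauli a * pauli b) = if a = b then (2 ^ N : ℂ) else 0 := by
  simp only [pauli_eq_piKron, piKron_mul, trace_piKron, Pi.mul_apply, trace_σ1_mul_σ1]
  split_ifs with h
  · simp [h]
  · obtain ⟨k, hk⟩ := Function.ne_iff.mp h
    exact Finset.prod_eq_zero (Finset.mem_univ k) (if_neg hk)

theorem pauli_ne_zero (a : Fin N → Fin 4) : pauli a ≠ 0 := by
  intro h
  have h2 := trace_pauli_mul_pauli a a
  rw [h, zero_mul, trace_zero, if_pos rfl] at h2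
  exact pow_ne_zero N two_ne_zero h2.symm

theorem star_eq_of_smul_pauli_isHermitian {c : ℂ} {a : Fin N → Fin 4}
    (h : (c • pauli a).IsHermitian) : star c = c := by
  have hstar := h.eq
  rw [conjTranspose_smul, pauli_conjTranspose] at hstar
  have h0 : (star c - c) • pauli a = 0 := by rw [sub_smul, hstar, sub_self]
  exact sub_eq_zero.mp ((smul_eq_zero.mp h0).resolve_right (pauli_ne_zero a))

theorem sq_eq_one_of_mem_phases {c : ℂ} (hc : c ∈ phases) (hreal : star c = c) : c ^ 2 = 1 := by
  simp only [phases, Set.mem_insert_iff, Set.mem_singleton_iff] at hc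
  rcases hc with rfl | rfl | rfl | rfl <;> simp [Complex.ext_iff] at hreal ⊢ <;> norm_num at hreal

end Pauli

section Conjugation

variable {n : Type*} [Fintype n]

theorem isHermitian_conj (U : Matrix n n ℂ) {A : Matrix n n ℂ} (hA : A.IsHermitian) :
    (U * A * Uᴴ).IsHermitian := by
  simp only [IsHermitian, conjTranspose_mul, conjTranspose_conjTranspose, hA.eq, mul_assoc]

variable [DecidableEq n] {U : Matrix n n ℂ}

theorem trace_conj_mul_conj (hU : U ∈ unitaryGroup n ℂ) (A B : Matrix n n ℂ) :
    trace (U * A * Uᴴ * (U * B * Uᴴ)) = trace (A * B) := by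
  have hUU : Uᴴ * U = 1 := mem_unitaryGroup_iff'.mp hU
  calc trace (U * A * Uᴴ * (U * B * Uᴴ)) = trace (U * (A * (Uᴴ * U) * B) * Uᴴ) := by
        simp only [mul_assoc]
    _ = trace (A * B) := by rw [trace_mul_cycle, hUU, one_mul, mul_one]

theorem conjTranspose_conj_eq_of_conj_eq (hU : U ∈ unitaryGroup n ℂ) {G : Matrix n n ℂ}
    (hG : U * G * Uᴴ = G) : Uᴴ * G * U = G := by
  have hUU : Uᴴ * U = 1 := mem_unitaryGroup_iff'.mp hU
  calc Uᴴ * G * U = Uᴴ * (U * G * Uᴴ) * U := by rw [hG]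
    _ = Uᴴ * U * G * (Uᴴ * U) := by simp only [mul_assoc]
    _ = G := by rw [hUU, one_mul, mul_one]

theorem trace_mul_eq_of_conj_eq_smul (hU : U ∈ unitaryGroup n ℂ) {G P Q : Matrix n n ℂ}
    (hG : U * G * Uᴴ = G) {c : ℂ} (hc : c ^ 2 = 1) (hP : U * P * Uᴴ = c • Q) :
    trace (G * Q) = c * trace (G * P) := by
  have h : c * trace (G * Q) = trace (G * P) := by
    calc c * trace (G * Q) = trace (U * (Uᴴ * G * U) * Uᴴ * (U * P * Uᴴ)) := by
          rw [hP, conjTranspose_conj_eq_of_conj_eq hU hG, hG, mul_smul_comm, trace_smul,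
            smul_eq_mul]
      _ = trace (G * P) := by rw [trace_conj_mul_conj hU, conjTranspose_conj_eq_of_conj_eq hU hG]
  rw [← h, ← mul_assoc, ← sq, hc, one_mul]

end Conjugation

theorem IsClifford.exists_conj_pauli {N : ℕ} {U : Op N} (hU : IsClifford U) :
    ∃ (c : (Fin N → Fin 4) → ℂ) (b : (Fin N → Fin 4) ≃ (Fin N → Fin 4)),
      ∀ a, c a ^ 2 = 1 ∧ U * pauli a * Uᴴ = c a • pauli (b a) := by
  choose c hc b hb using fun a : Fin N → Fin 4 =>
    hU.2 (pauli a) ⟨1, by simp [phases], a, (one_smul ℂ (pauli a)).symm⟩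
  have hsq : ∀ a, c a ^ 2 = 1 := fun a =>
    sq_eq_one_of_mem_phases (hc a) <| star_eq_of_smul_pauli_isHermitian <|
      hb a ▸ isHermitian_conj U (pauli_conjTranspose a)
  have hinj : Function.Injective b := by
    intro a₁ a₂ h
    by_contra hne
    have htr := trace_conj_mul_conj hU.1 (pauli a₁) (pauli a₂)
    rw [hb, hb, h, smul_mul_smul_comm, trace_smul, trace_pauli_mul_pauli, if_pos rfl,
      trace_pauli_mul_pauli, if_neg hne, smul_eq_mul] at htr
    have hc₁ : c a₁ ≠ 0 := fun h0 => by simpa [h0] using hsq a₁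
    have hc₂ : c a₂ ≠ 0 := fun h0 => by simpa [h0] using hsq a₂
    exact mul_ne_zero (mul_ne_zero hc₁ hc₂) (pow_ne_zero N two_ne_zero) htr
  exact ⟨c, Equiv.ofBijective b (Finite.injective_iff_bijective.mp hinj), fun a => ⟨hsq a, hb a⟩⟩

section TensorPower

variable {N : ℕ} (t : ℕ)

theorem tpow_eq_piKron (A : Op N) : tpow t A = piKron fun _ : Fin t => A := rfl

theorem tpow_conj (U A : Op N) : tpow t U * tpow t A * (tpow t U)ᴴ = tpow t (U * A * Uᴴ) := by
  simp only [tpow_eq_piKron, piKron_conjTranspose, piKron_mul]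
  rfl

theorem tpow_smul (c : ℂ) (A : Op N) : tpow t (c • A) = c ^ t • tpow t A := by
  simpa [tpow_eq_piKron] using piKron_smul (ι := Fin t) c A

end TensorPower

theorem pow_eq_pow_of_sq_eq_one {M : Type*} [Monoid M] {c : M} (hc : c ^ 2 = 1) {t t' : ℕ}
    (h : t % 2 = t' % 2) : c ^ t = c ^ t' := by
  rw [← Nat.mod_add_div t 2, ← Nat.mod_add_div t' 2, pow_add, pow_add, pow_mul, pow_mul, hc,
    one_pow, one_pow, h]

/-- for a Clifford `U` fixing `G` under conjugation, the operator
`L = Σ_P γ_P(G)^{t'} P^⊗t` (with `t ≡ t'` mod 2) is invariant under `U^⊗t` conjugation. -/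
theorem stmt5 {N : ℕ} (U : Op N) (hU : IsClifford U)
    (t t' : ℕ) (htt : t % 2 = t' % 2)
    (G : Op N) (hG : U * G * Uᴴ = G) :
    tpow t U *
        (∑ a : Fin N → Fin 4,
          (Matrix.trace (G * pauli a) / (2 ^ N : ℂ)) ^ t' • tpow t (pauli a)) *
        (tpow t U)ᴴ =
      ∑ a : Fin N → Fin 4,
        (Matrix.trace (G * pauli a) / (2 ^ N : ℂ)) ^ t' • tpow t (pauli a) := by
  obtain ⟨c, b, hcb⟩ := hU.exists_conj_pauli
  rw [Finset.mul_sum, Finset.sum_mul]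
  conv_rhs => rw [← b.sum_comp]
  refine Finset.sum_congr rfl fun a _ => ?_
  obtain ⟨hc, hconj⟩ := hcb a
  have hcoeff := trace_mul_eq_of_conj_eq_smul hU.1 hG hc hconj
  rw [mul_smul_comm, smul_mul_assoc, tpow_conj, hconj, tpow_smul, smul_smul, hcoeff,
    mul_div_assoc, mul_pow, pow_eq_pow_of_sq_eq_one hc htt, mul_comm]
end

section
/- Let N ≥ 2 and G = {(e^{iθZ})^⊗N : θ ∈ ℝ} (the diagonal U(1) symmetry). Then there is no subgroup Q of the Pauli group P_N with U_{N,G} = U_{N,Q}. -/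
open Matrix MeasureTheory

namespace Stmt15Aux

noncomputable def kron {N : ℕ} (f : Fin N → Matrix (Fin 2) (Fin 2) ℂ) : Op N :=
  Matrix.of fun i j => ∏ k, f k (i k) (j k)

lemma kron_apply {N} (f : Fin N → Matrix (Fin 2) (Fin 2) ℂ) (i j : QubitIdx N) :
    kron f i j = ∏ k, f k (i k) (j k) := rfl

lemma kron_mul {N} (f g : Fin N → Matrix (Fin 2) (Fin 2) ℂ) :
    kron f * kron g = kron fun k => f k * g k := by
  ext i j
  simp only [Matrix.mul_apply, kron_apply]
  rw [Finset.prod_univ_sum, Fintype.piFinset_univ]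
  exact Finset.sum_congr rfl fun m _ => Finset.prod_mul_distrib.symm

lemma kron_conjT {N} (f : Fin N → Matrix (Fin 2) (Fin 2) ℂ) :
    (kron f)ᴴ = kron fun k => (f k)ᴴ := by
  ext i j
  simp [kron_apply, Matrix.conjTranspose_apply, map_prod]

lemma kron_one {N} : kron (fun _ : Fin N => (1 : Matrix (Fin 2) (Fin 2) ℂ)) = 1 := by
  ext i j
  by_cases h : i = j
  · subst h; simp [kron_apply, Matrix.one_apply]
  · obtain ⟨k, hk⟩ := Function.ne_iff.mp h
    rw [Matrix.one_apply_ne h, kron_apply]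
    exact Finset.prod_eq_zero (Finset.mem_univ k) (by simp [Matrix.one_apply, hk])

lemma kron_trace {N} (f : Fin N → Matrix (Fin 2) (Fin 2) ℂ) :
    (kron f).trace = ∏ k, (f k).trace := by
  simp only [Matrix.trace, Matrix.diag, kron_apply]
  rw [Finset.prod_univ_sum, Fintype.piFinset_univ]

lemma kron_smul {N} (c : Fin N → ℂ) (f : Fin N → Matrix (Fin 2) (Fin 2) ℂ) :
    kron (fun k => c k • f k) = (∏ k, c k) • kron f := by
  ext i j
  simp [kron_apply, Finset.prod_mul_distrib, Matrix.smul_apply, smul_eq_mul]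

lemma pauli_eq_kron {N} (a : Fin N → Fin 4) : pauli a = kron fun k => σ1 (a k) := rfl

lemma kronPow_eq_kron {N} (A : Matrix (Fin 2) (Fin 2) ℂ) :
    (kronPow A : Op N) = kron fun _ => A := rfl

noncomputable def sgn (v : Fin 4) : ℂ := if v = 0 ∨ v = 1 then 1 else -1

lemma σ1_mul_conjT (v : Fin 4) : σ1 v * (σ1 v)ᴴ = 1 := by
  fin_cases v <;>
  · ext i j
    fin_cases i <;> fin_cases j <;>
      simp [σ1, Matrix.mul_apply, Fin.sum_univ_two, Matrix.one_apply,
        Matrix.conjTranspose_apply, Complex.ext_iff]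

lemma σ1_trace_orth (u v : Fin 4) : ((σ1 u)ᴴ * σ1 v).trace = if u = v then 2 else 0 := by
  fin_cases u <;> fin_cases v <;>
    simp [σ1, Matrix.trace, Matrix.mul_apply, Fin.sum_univ_two,
      Matrix.conjTranspose_apply, Matrix.one_apply, Complex.ext_iff] <;> norm_num

lemma X_mul_σ1 (v : Fin 4) : σ1 1 * σ1 v = sgn v • (σ1 v * σ1 1) := by
  fin_cases v <;>
  · ext i j
    fin_cases i <;> fin_cases j <;>
      simp [σ1, sgn, Matrix.mul_apply, Fin.sum_univ_two, Matrix.one_apply,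
        Matrix.smul_apply, Complex.ext_iff]

lemma sgn_sq (v : Fin 4) : sgn v * sgn v = 1 := by
  unfold sgn; split_ifs <;> norm_num

lemma pauli_unitary {N} (a : Fin N → Fin 4) :
    pauli a ∈ Matrix.unitaryGroup (QubitIdx N) ℂ := by
  rw [Matrix.mem_unitaryGroup_iff, Matrix.star_eq_conjTranspose, pauli_eq_kron,
    kron_conjT, kron_mul]
  rw [show (fun k => σ1 (a k) * (σ1 (a k))ᴴ) = fun _ : Fin N => (1 : Matrix (Fin 2) (Fin 2) ℂ)
    from funext fun k => σ1_mul_conjT (a k)]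
  exact kron_one

lemma pauli_inj {N} {a b : Fin N → Fin 4} (h : pauli a = pauli b) : a = b := by
  funext k
  by_contra hk
  have h1 : ((pauli a)ᴴ * pauli b).trace = 0 := by
    rw [pauli_eq_kron, pauli_eq_kron, kron_conjT, kron_mul, kron_trace]
    exact Finset.prod_eq_zero (Finset.mem_univ k) (by rw [σ1_trace_orth, if_neg hk])
  have h2 : ((pauli a)ᴴ * pauli b).trace = 2 ^ N := by
    rw [h, pauli_eq_kron, kron_conjT, kron_mul, kron_trace]
    simp [σ1_trace_orth]
  rw [h1] at h2
  exact absurd h2.symm (by norm_num)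

noncomputable def swapOp {N : ℕ} (k0 k1 : Fin N) : Op N :=
  Matrix.of fun i j => if i = j ∘ (Equiv.swap k0 k1) then 1 else 0

lemma comp_swap_eq {N} {k0 k1 : Fin N} {i m : QubitIdx N} :
    i = m ∘ Equiv.swap k0 k1 ↔ m = i ∘ Equiv.swap k0 k1 := by
  constructor <;> intro h <;> subst h <;> funext k <;>
    simp [Function.comp, Equiv.swap_apply_self]

lemma mul_swapOp {N} (A : Op N) (k0 k1 : Fin N) (i j : QubitIdx N) :
    (A * swapOp k0 k1) i j = A i (j ∘ Equiv.swap k0 k1) := by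
  simp [swapOp, Matrix.mul_apply]

lemma swapOp_mul {N} (A : Op N) (k0 k1 : Fin N) (i j : QubitIdx N) :
    (swapOp k0 k1 * A) i j = A (i ∘ Equiv.swap k0 k1) j := by
  simp only [swapOp, Matrix.mul_apply, Matrix.of_apply]
  simp_rw [comp_swap_eq (k0 := k0) (k1 := k1) (i := i)]
  simp

lemma swapOp_conjT {N} (k0 k1 : Fin N) : (swapOp k0 k1)ᴴ = swapOp k0 k1 := by
  ext i j
  simp only [Matrix.conjTranspose_apply, swapOp, Matrix.of_apply]
  by_cases h : j = i ∘ Equiv.swap k0 k1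
  · rw [if_pos h, if_pos (comp_swap_eq.mpr h)]; simp
  · rw [if_neg h, if_neg fun hh => h (comp_swap_eq.mp hh)]; simp

lemma comp_swap_comp_swap {N} (k0 k1 : Fin N) (i : QubitIdx N) :
    (i ∘ Equiv.swap k0 k1) ∘ Equiv.swap k0 k1 = i := by
  funext k; simp [Function.comp, Equiv.swap_apply_self]

lemma swapOp_mul_self {N} (k0 k1 : Fin N) : swapOp k0 k1 * swapOp k0 k1 = 1 := by
  ext i j
  rw [swapOp_mul]
  simp only [swapOp, Matrix.of_apply, Matrix.one_apply]
  congr 1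
  rw [eq_iff_iff]
  constructor
  · intro h
    funext k
    simpa [Function.comp, Equiv.swap_apply_self] using
      congrFun h (Equiv.swap k0 k1 k)
  · rintro rfl; rfl

lemma swapOp_unitary {N} (k0 k1 : Fin N) :
    swapOp k0 k1 ∈ Matrix.unitaryGroup (QubitIdx N) ℂ := by
  rw [Matrix.mem_unitaryGroup_iff, Matrix.star_eq_conjTranspose, swapOp_conjT]
  exact swapOp_mul_self k0 k1

lemma swapOp_comm_kronPow {N} (k0 k1 : Fin N) (A : Matrix (Fin 2) (Fin 2) ℂ) :
    swapOp k0 k1 * kronPow A = kronPow A * swapOp k0 k1 := by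
  ext i j
  rw [swapOp_mul, mul_swapOp]
  show ∏ k, A (i (Equiv.swap k0 k1 k)) (j k) = ∏ k, A (i k) (j (Equiv.swap k0 k1 k))
  rw [← Equiv.prod_comp (Equiv.swap k0 k1) (fun k => A (i k) (j (Equiv.swap k0 k1 k)))]
  simp [Equiv.swap_apply_self]

lemma prod_two {N} {k0 k1 : Fin N} (hk : k0 ≠ k1) (ε : Fin N → ℂ)
    (hε : ∀ k, k ≠ k0 → k ≠ k1 → ε k = 1) : ∏ k, ε k = ε k0 * ε k1 := by
  rw [← Finset.prod_pair hk]
  refine (Finset.prod_subset (Finset.subset_univ _) ?_).symm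
  intro x _ hx
  simp only [Finset.mem_insert, Finset.mem_singleton] at hx
  push_neg at hx
  exact hε x hx.1 hx.2

/-- The index function of `X_{k0} X_{k1}`. -/
noncomputable def aXX {N : ℕ} (k0 k1 : Fin N) : Fin N → Fin 4 :=
  fun k => if k = k0 ∨ k = k1 then 1 else 0

/-- If swap conjugation fixes `pauli a` then `a k0 = a k1`. -/
lemma swap_pauli_comm {N} {k0 k1 : Fin N} {a : Fin N → Fin 4}
    (h : swapOp k0 k1 * pauli a = pauli a * swapOp k0 k1) : a k0 = a k1 := by
  have hpp : pauli a = pauli (a ∘ Equiv.swap k0 k1) := by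
    ext i j
    have h2 : (swapOp k0 k1 * pauli a) (i ∘ Equiv.swap k0 k1) j
        = (pauli a * swapOp k0 k1) (i ∘ Equiv.swap k0 k1) j := by rw [h]
    rw [swapOp_mul, mul_swapOp, comp_swap_comp_swap] at h2
    rw [h2]
    show ∏ k, σ1 (a k) (i (Equiv.swap k0 k1 k)) (j (Equiv.swap k0 k1 k))
      = ∏ k, σ1 (a (Equiv.swap k0 k1 k)) (i k) (j k)
    rw [← Equiv.prod_comp (Equiv.swap k0 k1)
      (fun k => σ1 (a (Equiv.swap k0 k1 k)) (i k) (j k))]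
    simp [Equiv.swap_apply_self]
  have ha := pauli_inj hpp
  conv_lhs => rw [ha]
  simp

/-- `X_{k0} X_{k1}` commutes with any symmetric Pauli. -/
lemma XX_comm_pauli {N} {k0 k1 : Fin N} (hk : k0 ≠ k1) {a : Fin N → Fin 4}
    (ha : a k0 = a k1) : pauli (aXX k0 k1) * pauli a = pauli a * pauli (aXX k0 k1) := by
  rw [pauli_eq_kron, pauli_eq_kron, kron_mul, kron_mul]
  have hfun : (fun k => σ1 (aXX k0 k1 k) * σ1 (a k)) = fun k =>
      (if k = k0 ∨ k = k1 then sgn (a k) else 1) • (σ1 (a k) * σ1 (aXX k0 k1 k)) := by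
    funext k
    by_cases h : k = k0 ∨ k = k1
    · rw [if_pos h, show aXX k0 k1 k = 1 from if_pos h, X_mul_σ1]
    · rw [if_neg h, show aXX k0 k1 k = 0 from if_neg h, one_smul]
      show σ1 0 * σ1 (a k) = σ1 (a k) * σ1 0
      show (1 : Matrix (Fin 2) (Fin 2) ℂ) * σ1 (a k) = σ1 (a k) * 1
      rw [one_mul, mul_one]
  rw [hfun, kron_smul, prod_two hk _ (fun k h0 h1 => by simp [h0, h1])]
  have hval : (if k0 = k0 ∨ k0 = k1 then sgn (a k0) else 1)
      * (if k1 = k0 ∨ k1 = k1 then sgn (a k1) else 1) = 1 := by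
    rw [if_pos (Or.inl rfl), if_pos (Or.inr rfl), ha, sgn_sq]
  rw [hval, one_smul]

/-- `X_{k0} X_{k1}` does not commute with `(e^{i(π/4)Z})^{⊗N}`. -/
lemma XX_not_comm {N} {k0 k1 : Fin N} (hk : k0 ≠ k1) :
    pauli (aXX k0 k1) * kronPow (expZ (Real.pi / 4))
      ≠ kronPow (expZ (Real.pi / 4)) * pauli (aXX k0 k1) := by
  intro h
  set θ : ℝ := Real.pi / 4 with hθ
  set i₀ : QubitIdx N := fun k => if k = k0 ∨ k = k1 then 1 else 0 with hi₀
  set j₀ : QubitIdx N := fun _ => 0 with hj₀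
  have h2 : (pauli (aXX k0 k1) * kronPow (expZ θ) : Op N) i₀ j₀
      = (kronPow (expZ θ) * pauli (aXX k0 k1) : Op N) i₀ j₀ := by rw [h]
  rw [pauli_eq_kron, kronPow_eq_kron, kron_mul, kron_mul] at h2
  have hL : (kron fun k => σ1 (aXX k0 k1 k) * expZ θ) i₀ j₀
      = ∏ _k : Fin N, Complex.exp ((θ : ℂ) * Complex.I) := by
    rw [kron_apply]
    refine Finset.prod_congr rfl fun k _ => ?_
    by_cases hkk : k = k0 ∨ k = k1
    · rw [show aXX k0 k1 k = 1 from if_pos hkk, show i₀ k = 1 from if_pos hkk,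
        show j₀ k = 0 from rfl]
      simp [σ1, expZ, Matrix.mul_apply, Fin.sum_univ_two]
    · rw [show aXX k0 k1 k = 0 from if_neg hkk, show i₀ k = 0 from if_neg hkk,
        show j₀ k = 0 from rfl]
      show ((1 : Matrix (Fin 2) (Fin 2) ℂ) * expZ θ) 0 0 = _
      simp [expZ]
  have hR : (kron fun k => expZ θ * σ1 (aXX k0 k1 k)) i₀ j₀
      = (∏ _k : Fin N, Complex.exp ((θ : ℂ) * Complex.I))
        * (Complex.exp (-2 * (θ : ℂ) * Complex.I) * Complex.exp (-2 * (θ : ℂ) * Complex.I)) := by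
    rw [kron_apply]
    have hfac : ∀ k : Fin N, (expZ θ * σ1 (aXX k0 k1 k)) (i₀ k) (j₀ k)
        = Complex.exp ((θ : ℂ) * Complex.I)
          * (if k = k0 ∨ k = k1 then Complex.exp (-2 * (θ : ℂ) * Complex.I) else 1) := by
      intro k
      by_cases hkk : k = k0 ∨ k = k1
      · rw [show aXX k0 k1 k = 1 from if_pos hkk, show i₀ k = 1 from if_pos hkk,
          show j₀ k = 0 from rfl, if_pos hkk]
        have : (expZ θ * σ1 1) 1 0 = Complex.exp (-(θ : ℂ) * Complex.I) := by
          simp [σ1, expZ, Matrix.mul_apply, Fin.sum_univ_two]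
        rw [this, ← Complex.exp_add]
        ring_nf
      · rw [show aXX k0 k1 k = 0 from if_neg hkk, show i₀ k = 0 from if_neg hkk,
          show j₀ k = 0 from rfl, if_neg hkk, mul_one]
        show (expZ θ * (1 : Matrix (Fin 2) (Fin 2) ℂ)) 0 0 = _
        simp [expZ]
    rw [Finset.prod_congr rfl fun k _ => hfac k, Finset.prod_mul_distrib]
    congr 1
    exact prod_two hk _ (fun k h0 h1 => by simp [h0, h1]) |>.trans (by
      rw [if_pos (Or.inl rfl), if_pos (Or.inr rfl)])
  rw [hL, hR] at h2
  have hP : (∏ _k : Fin N, Complex.exp ((θ : ℂ) * Complex.I)) ≠ 0 :=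
    Finset.prod_ne_zero_iff.mpr fun _ _ => Complex.exp_ne_zero _
  have hone : Complex.exp (-2 * (θ : ℂ) * Complex.I) * Complex.exp (-2 * (θ : ℂ) * Complex.I)
      = 1 := by
    have := mul_left_cancel₀ hP (by rw [← h2, mul_one] :
      (∏ _k : Fin N, Complex.exp ((θ : ℂ) * Complex.I)) * 1
        = (∏ _k : Fin N, Complex.exp ((θ : ℂ) * Complex.I))
          * (Complex.exp (-2 * (θ : ℂ) * Complex.I) * Complex.exp (-2 * (θ : ℂ) * Complex.I)))
    exact this.symm
  rw [← Complex.exp_add] at hone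
  have harg : -2 * (θ : ℂ) * Complex.I + -2 * (θ : ℂ) * Complex.I
      = -((Real.pi : ℂ) * Complex.I) := by
    rw [hθ]; push_cast; ring
  rw [harg, Complex.exp_neg, Complex.exp_pi_mul_I] at hone
  norm_num at hone

end Stmt15Aux

/-- for `N ≥ 2` and the diagonal U(1) symmetry `G = {(e^{iθZ})^⊗N}`,
there is no Pauli subgroup `Q` with `U_{N,G} = U_{N,Q}`. -/
theorem stmt15 {N : ℕ} (hN : 2 ≤ N) :
    ¬ ∃ Q : Set (Op N), Q ⊆ PauliGroup N ∧ (1 : Op N) ∈ Q ∧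
        (∀ g ∈ Q, ∀ h ∈ Q, g * h ∈ Q) ∧ (∀ g ∈ Q, gᴴ ∈ Q) ∧
        UnitarySym N {U : Op N | ∃ θ : ℝ, U = kronPow (expZ θ)} = UnitarySym N Q := by
  classical
  rintro ⟨Q, hQP, -, -, -, hEq⟩
  have h0 : 0 < N := by omega
  have h1 : 1 < N := by omega
  set k0 : Fin N := ⟨0, h0⟩ with hk0def
  set k1 : Fin N := ⟨1, h1⟩ with hk1def
  have hk01 : k0 ≠ k1 := by simp [hk0def, hk1def, Fin.ext_iff]
  set M : Op N := pauli (Stmt15Aux.aXX k0 k1) with hM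
  -- the swap operator is G-symmetric, hence Q-symmetric
  have hS : Stmt15Aux.swapOp k0 k1
      ∈ UnitarySym N {U : Op N | ∃ θ : ℝ, U = kronPow (expZ θ)} :=
    ⟨Stmt15Aux.swapOp_unitary k0 k1, by
      rintro g ⟨θ, rfl⟩; exact Stmt15Aux.swapOp_comm_kronPow k0 k1 _⟩
  rw [hEq] at hS
  -- M belongs to UnitarySym N Q
  have hMQ : M ∈ UnitarySym N Q := by
    refine ⟨Stmt15Aux.pauli_unitary _, fun g hg => ?_⟩
    obtain ⟨c, hc, a, rfl⟩ := hQP hg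
    have hc0 : c ≠ 0 := by
      rcases hc with h | h | h | h <;> subst h <;> simp [Complex.I_ne_zero]
    have hcomm := hS.2 _ hg
    rw [Matrix.mul_smul, Matrix.smul_mul] at hcomm
    have hcomm' : Stmt15Aux.swapOp k0 k1 * pauli a = pauli a * Stmt15Aux.swapOp k0 k1 :=
      smul_right_injective _ hc0 hcomm
    have hak : a k0 = a k1 := Stmt15Aux.swap_pauli_comm hcomm'
    rw [Matrix.mul_smul, Matrix.smul_mul]
    congr 1
    exact Stmt15Aux.XX_comm_pauli hk01 hak
  rw [← hEq] at hMQ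
  exact Stmt15Aux.XX_not_comm hk01
    (hMQ.2 (kronPow (expZ (Real.pi / 4))) ⟨Real.pi / 4, rfl⟩)
end
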